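/- arXiv:2308.14867 — 2 statements merged into one kernel-verified Lean document; each statement's English description precedes it below -/
import Mathlib

section
/- With g_n, h_n as in the recursion g_1 = 1, h_1 = (x-1)^2, g_n = h_{n-1}^2, h_n = (g_{n-1}-h_{n-1})^2, the leading coefficient of h_n g_n' - g_n h_n' is, up to sign, a power of 2 for every n ≥ 1. -/
open Polynomial

/-- The numerators and denominators of the iterates of `f(x) = 1/(x-1)²`:
`gh n = (gₙ, hₙ)` with `g₁ = 1`, `h₁ = (x-1)²`, `gₙ = hₙ₋₁²`, `hₙ = (gₙ₋₁ - hₙ₋₁)²`. -/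
noncomputable def gh : ℕ → Polynomial ℚ × Polynomial ℚ
  | 0 => (1, 1)
  | 1 => (1, (X - 1) ^ 2)
  | n + 2 => ((gh (n + 1)).2 ^ 2, ((gh (n + 1)).1 - (gh (n + 1)).2) ^ 2)

/-- `gₙ`, the numerator of `fⁿ`. -/
noncomputable def g (n : ℕ) : Polynomial ℚ := (gh n).1

/-- `hₙ`, the denominator of `fⁿ`. -/
noncomputable def h (n : ℕ) : Polynomial ℚ := (gh n).2

/-- `c` is, up to sign, a power of 2. -/
def P2 (c : ℚ) : Prop := ∃ m : ℕ, c = 2 ^ m ∨ c = -(2 ^ m)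

lemma P2.mul {a b : ℚ} (ha : P2 a) (hb : P2 b) : P2 (a * b) := by
  obtain ⟨m, hm⟩ := ha
  obtain ⟨k, hk⟩ := hb
  refine ⟨m + k, ?_⟩
  rcases hm with rfl | rfl <;> rcases hk with rfl | rfl <;>
    [left; right; right; left] <;> ring

lemma P2.neg {a : ℚ} (ha : P2 a) : P2 (-a) := by
  obtain ⟨m, hm⟩ := ha
  exact ⟨m, by rcases hm with rfl | rfl <;> [right; left] <;> ring⟩

lemma P2_one : P2 1 := ⟨0, Or.inl (by norm_num)⟩

lemma P2_two : P2 2 := ⟨1, Or.inl (by norm_num)⟩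

lemma g_add_two (n : ℕ) : g (n + 2) = h (n + 1) ^ 2 := rfl

lemma h_add_two (n : ℕ) : h (n + 2) = (g (n + 1) - h (n + 1)) ^ 2 := rfl

lemma C_two_eq : (C 2 : ℚ[X]) = 2 := map_ofNat C 2

/-- Facts about subtraction when one degree dominates. -/
lemma sub_facts {p q : Polynomial ℚ} (hp : p ≠ 0) (hlt : q.natDegree < p.natDegree) :
    p - q ≠ 0 ∧ (p - q).natDegree = p.natDegree ∧ (p - q).leadingCoeff = p.leadingCoeff := by
  have hdeg : (p - q).natDegree = p.natDegree := natDegree_sub_eq_left_of_natDegree_lt hlt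
  have hlc : (p - q).leadingCoeff = p.leadingCoeff := by
    rw [leadingCoeff, hdeg, coeff_sub, coeff_eq_zero_of_natDegree_lt hlt, sub_zero, leadingCoeff]
  have hne : p - q ≠ 0 := by
    intro h0
    exact hp (leadingCoeff_eq_zero.mp (by rw [← hlc, h0, leadingCoeff_zero]))
  exact ⟨hne, hdeg, hlc⟩

/-- The main invariant, proved by induction. -/
lemma inv (n : ℕ) (hn : 1 ≤ n) :
    g n ≠ 0 ∧ h n ≠ 0 ∧ g n - h n ≠ 0 ∧
    P2 (g n).leadingCoeff ∧ P2 (h n).leadingCoeff ∧ P2 ((g n - h n)).leadingCoeff ∧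
    ((g n).natDegree < (h n).natDegree ∨
      ((g n).natDegree = (h n).natDegree ∧ (g n - h n).natDegree < (h n).natDegree) ∨
      (h n).natDegree < (g n).natDegree) := by
  induction n, hn using Nat.le_induction with
  | base =>
    have hg : g 1 = 1 := rfl
    have hh : h 1 = (X - 1) ^ 2 := rfl
    have hX : (X - 1 : ℚ[X]) = X - C 1 := by simp
    have hhne : h 1 ≠ 0 := by
      rw [hh, hX]; exact pow_ne_zero _ (X_sub_C_ne_zero 1)
    have hhdeg : (h 1).natDegree = 2 := by rw [hh]; compute_degree!
    have hhlc : (h 1).leadingCoeff = 1 := by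
      rw [hh, hX, leadingCoeff_pow, leadingCoeff_X_sub_C, one_pow]
    have hgdeg : (g 1).natDegree = 0 := by rw [hg]; simp
    have hgne : g 1 ≠ 0 := by rw [hg]; exact one_ne_zero
    have hlt : (g 1).natDegree < (h 1).natDegree := by omega
    obtain ⟨hne, hdeg, hlc⟩ := sub_facts hhne hlt
    refine ⟨hgne, hhne, ?_, ⟨0, Or.inl (by rw [hg]; simp)⟩, hhlc ▸ P2_one, ?_, Or.inl hlt⟩
    · intro h0
      exact hne (by rw [← neg_sub (g 1) (h 1), h0, neg_zero])
    · have : (g 1 - h 1).leadingCoeff = -(h 1).leadingCoeff := by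
        rw [← neg_sub (h 1) (g 1), leadingCoeff_neg, hlc]
      rw [this, hhlc]
      exact P2_one.neg
  | succ n hn ih =>
    obtain ⟨hgne, hhne, hghne, hPg, hPh, hPgh, hcases⟩ := ih
    obtain ⟨m, rfl⟩ : ∃ m, n = m + 1 := ⟨n - 1, by omega⟩
    -- new g and h
    rw [g_add_two, h_add_two]
    have hg'ne : h (m + 1) ^ 2 ≠ 0 := pow_ne_zero _ hhne
    have hh'ne : (g (m + 1) - h (m + 1)) ^ 2 ≠ 0 := pow_ne_zero _ hghne
    have hg'deg : (h (m + 1) ^ 2).natDegree = 2 * (h (m + 1)).natDegree := natDegree_pow _ _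
    have hh'deg : ((g (m + 1) - h (m + 1)) ^ 2).natDegree
        = 2 * (g (m + 1) - h (m + 1)).natDegree := natDegree_pow _ _
    have hg'lc : (h (m + 1) ^ 2).leadingCoeff = (h (m + 1)).leadingCoeff ^ 2 :=
      leadingCoeff_pow _ _
    have hh'lc : ((g (m + 1) - h (m + 1)) ^ 2).leadingCoeff
        = (g (m + 1) - h (m + 1)).leadingCoeff ^ 2 := leadingCoeff_pow _ _
    have hPg' : P2 (h (m + 1) ^ 2).leadingCoeff := by rw [hg'lc, sq]; exact hPh.mul hPh
    have hPh' : P2 ((g (m + 1) - h (m + 1)) ^ 2).leadingCoeff := by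
      rw [hh'lc, sq]; exact hPgh.mul hPgh
    rcases hcases with hA | ⟨hBeq, hBlt⟩ | hC
    · -- Case A : deg g < deg h  →  Case B
      -- g' - h' = g * (2h - g)
      have hid : h (m + 1) ^ 2 - (g (m + 1) - h (m + 1)) ^ 2
          = g (m + 1) * (C 2 * h (m + 1) - g (m + 1)) := by
        rw [C_two_eq]; ring
      have h2h : (C (2:ℚ) * h (m + 1)) ≠ 0 := mul_ne_zero (by simp) hhne
      have h2hdeg : (C (2:ℚ) * h (m + 1)).natDegree = (h (m + 1)).natDegree := by
        rw [natDegree_C_mul (by norm_num)]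
      have h2hlc : (C (2:ℚ) * h (m + 1)).leadingCoeff = 2 * (h (m + 1)).leadingCoeff := by
        rw [leadingCoeff_mul, leadingCoeff_C]
      obtain ⟨hne2, hdeg2, hlc2⟩ := sub_facts h2h (h2hdeg ▸ hA)
      have hprodne : g (m + 1) * (C 2 * h (m + 1) - g (m + 1)) ≠ 0 := mul_ne_zero hgne hne2
      have hsubne : h (m + 1) ^ 2 - (g (m + 1) - h (m + 1)) ^ 2 ≠ 0 := hid ▸ hprodne
      have hsublc : (h (m + 1) ^ 2 - (g (m + 1) - h (m + 1)) ^ 2).leadingCoeff =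
          (g (m + 1)).leadingCoeff * (2 * (h (m + 1)).leadingCoeff) := by
        rw [hid, leadingCoeff_mul, hlc2, h2hlc]
      have hsubdeg : (h (m + 1) ^ 2 - (g (m + 1) - h (m + 1)) ^ 2).natDegree =
          (g (m + 1)).natDegree + (h (m + 1)).natDegree := by
        rw [hid, natDegree_mul hgne hne2, hdeg2, h2hdeg]
      -- deg (g - h) = deg h  in case A
      have hghdeg : (g (m + 1) - h (m + 1)).natDegree = (h (m + 1)).natDegree := by
        rw [← natDegree_neg, neg_sub]
        exact (sub_facts hhne hA).2.1
      refine ⟨hg'ne, hh'ne, hsubne, hPg', hPh', ?_, Or.inr (Or.inl ⟨?_, ?_⟩)⟩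
      · rw [hsublc]; exact hPg.mul (P2_two.mul hPh)
      · omega
      · omega
    · -- Case B : deg g = deg h, deg (g - h) < deg h  →  Case C
      have hlt' : ((g (m + 1) - h (m + 1)) ^ 2).natDegree < (h (m + 1) ^ 2).natDegree := by
        omega
      obtain ⟨hne2, hdeg2, hlc2⟩ := sub_facts hg'ne hlt'
      refine ⟨hg'ne, hh'ne, hne2, hPg', hPh', ?_, Or.inr (Or.inr (by omega))⟩
      rw [hlc2]; exact hPg'
    · -- Case C : deg h < deg g  →  Case A
      have hghdeg : (g (m + 1) - h (m + 1)).natDegree = (g (m + 1)).natDegree :=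
        (sub_facts hgne hC).2.1
      have hlt' : (h (m + 1) ^ 2).natDegree < ((g (m + 1) - h (m + 1)) ^ 2).natDegree := by
        omega
      obtain ⟨hne2, hdeg2, hlc2⟩ := sub_facts hh'ne hlt'
      refine ⟨hg'ne, hh'ne, ?_, hPg', hPh', ?_, Or.inl (by omega)⟩
      · rw [← neg_sub ((g (m + 1) - h (m + 1)) ^ 2) (h (m + 1) ^ 2)]
        exact neg_ne_zero.mpr hne2
      · have : (h (m + 1) ^ 2 - (g (m + 1) - h (m + 1)) ^ 2).leadingCoeff =
            -((g (m + 1) - h (m + 1)) ^ 2).leadingCoeff := by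
          rw [← neg_sub ((g (m + 1) - h (m + 1)) ^ 2) (h (m + 1) ^ 2), leadingCoeff_neg, hlc2]
        rw [this]; exact hPh'.neg

/-- The Wronskian. -/
noncomputable def W (n : ℕ) : Polynomial ℚ :=
  h n * derivative (g n) - g n * derivative (h n)

lemma W_succ (n : ℕ) (hn : 1 ≤ n) :
    W (n + 1) = C (-2) * (h n * ((g n - h n) * W n)) := by
  obtain ⟨m, rfl⟩ : ∃ m, n = m + 1 := ⟨n - 1, by omega⟩
  unfold W
  rw [g_add_two, h_add_two, derivative_sq, derivative_sq, derivative_sub]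
  rw [show (C (-2) : ℚ[X]) = -2 by rw [map_neg, C_two_eq], C_two_eq]
  ring

lemma P2_lcW (n : ℕ) (hn : 1 ≤ n) : P2 (W n).leadingCoeff := by
  induction n, hn using Nat.le_induction with
  | base =>
    have hW1 : W 1 = C (-2) * (X - C 1) := by
      unfold W
      have hg : g 1 = 1 := rfl
      have hh : h 1 = (X - 1) ^ 2 := rfl
      rw [hg, hh, derivative_one, derivative_sq, derivative_sub, derivative_X, derivative_one]
      rw [show (C (-2) : ℚ[X]) = -2 by rw [map_neg, C_two_eq], C_two_eq, map_one]
      ring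
    rw [hW1, leadingCoeff_mul, leadingCoeff_C, leadingCoeff_X_sub_C, mul_one]
    exact ⟨1, Or.inr (by norm_num)⟩
  | succ n hn ih =>
    obtain ⟨-, -, -, -, hPh, hPgh, -⟩ := inv n hn
    rw [W_succ n hn, leadingCoeff_mul, leadingCoeff_mul, leadingCoeff_mul, leadingCoeff_C]
    exact ((P2_two.neg).mul (hPh.mul (hPgh.mul ih)))

/-- For every `n ≥ 1`, the leading coefficient of `hₙ gₙ' - gₙ hₙ'`
is, up to sign, a power of `2`. -/
theorem leadingCoeff_wronskian_pow_two (n : ℕ) (hn : 1 ≤ n) :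
    ∃ m : ℕ, (h n * derivative (g n) - g n * derivative (h n)).leadingCoeff = 2 ^ m ∨
      (h n * derivative (g n) - g n * derivative (h n)).leadingCoeff = -(2 ^ m) := by
  exact P2_lcW n hn
end

section
/- Let G ≤ Aut(T) be the closed subgroup generated by a_1 = (id,a_3), a_2 = (id,a_1)σ, a_3 = (a_2,id)σ. For any x ∈ G, the element (x,x) (acting diagonally on the two first-level subtrees) is in G. -/
namespace TreeAut

/-- An automorphism of the infinite rooted binary tree, encoded by its portrait:
at each vertex (a finite word over `Bool`), whether the two subtrees are swapped. -/
def Port : Type := List Bool → Bool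

/-- Auxiliary: the action of a tree automorphism on vertices (structural in the vertex). -/
def actAux : List Bool → Port → List Bool
  | [], _ => []
  | b :: l, p => (xor b (p [])) :: actAux l (fun s => p (b :: s))

/-- The action of a tree automorphism on the vertices of the tree. -/
def act (p : Port) (l : List Bool) : List Bool := actAux l p

/-- Regard a function on vertices as a portrait. -/
def ofFun (f : List Bool → Bool) : Port := f

instance : One Port := ⟨fun _ => false⟩
instance : Mul Port := ⟨fun p q => ofFun fun s => xor (p s) (q (act p s))⟩

lemma one_apply (s : List Bool) : (1 : Port) s = false := rfl
lemma mul_apply (p q : Port) (s : List Bool) : (p * q) s = xor (p s) (q (act p s)) := rfl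

/-- The left subtree portrait of `p` under branch `b`. -/
def sub (p : Port) (b : Bool) : Port := ofFun fun s => p (b :: s)

lemma act_nil (p : Port) : act p [] = [] := rfl
lemma act_cons (p : Port) (b : Bool) (l : List Bool) :
    act p (b :: l) = (xor b (p [])) :: act (sub p b) l := rfl

lemma act_one : ∀ l, act (1 : Port) l = l
  | [] => rfl
  | b :: l => by
      show (xor b false) :: act (sub 1 b) l = b :: l
      have : sub 1 b = (1 : Port) := rfl
      rw [Bool.xor_false, this, act_one l]

lemma sub_mul (p q : Port) (b : Bool) : sub (p * q) b = sub p b * sub q (xor b (p [])) := rfl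

lemma act_mul : ∀ (l : List Bool) (p q : Port), act (p * q) l = act q (act p l)
  | [], _, _ => rfl
  | b :: l, p, q => by
      rw [act_cons, act_cons, act_cons, sub_mul, act_mul l]
      show (xor b (xor (p []) (q []))) :: _ = (xor (xor b (p [])) (q [])) :: _
      rw [Bool.xor_assoc]

/-- Auxiliary: the inverse action (structural in the vertex). -/
def invActAux : List Bool → Port → List Bool
  | [], _ => []
  | b :: l, p => (xor b (p [])) :: invActAux l (fun s => p ((xor b (p [])) :: s))

/-- The inverse of the action of a tree automorphism. -/
def invAct (p : Port) (l : List Bool) : List Bool := invActAux l p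

instance : Inv Port := ⟨fun p => ofFun fun s => p (invAct p s)⟩

lemma inv_apply (p : Port) (s : List Bool) : (p⁻¹ : Port) s = p (invAct p s) := rfl

lemma invAct_cons (p : Port) (b : Bool) (l : List Bool) :
    invAct p (b :: l) = (xor b (p [])) :: invAct (sub p (xor b (p []))) l := rfl

lemma invAct_act : ∀ (l : List Bool) (p : Port), invAct p (act p l) = l
  | [], _ => rfl
  | b :: l, p => by
      rw [act_cons, invAct_cons]
      have hb : xor (xor b (p [])) (p []) = b := by
        rw [Bool.xor_assoc, Bool.xor_self, Bool.xor_false]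
      rw [hb]
      exact congrArg _ (invAct_act l _)

lemma sub_inv (p : Port) (b : Bool) : sub (p⁻¹ : Port) b = (sub p (xor b (p [])))⁻¹ := by
  funext s
  show p (invAct p (b :: s)) = sub p (xor b (p [])) (invAct (sub p (xor b (p []))) s)
  rw [invAct_cons]
  rfl

lemma act_inv : ∀ (l : List Bool) (p : Port), act (p⁻¹ : Port) l = invAct p l
  | [], _ => rfl
  | b :: l, p => by
      rw [act_cons, sub_inv, act_inv l]
      have : (p⁻¹ : Port) [] = p [] := rfl
      rw [this, invAct_cons]

instance : Group Port :=
  Group.ofLeftAxioms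
    (fun p q r => by
      funext s
      show xor (xor (p s) (q (act p s))) (r (act (p * q) s))
          = xor (p s) (xor (q (act p s)) (r (act q (act p s))))
      rw [act_mul, Bool.xor_assoc])
    (fun p => by
      funext s
      show xor false (p (act 1 s)) = p s
      rw [Bool.false_xor, act_one])
    (fun p => by
      funext s
      show xor ((p⁻¹ : Port) s) (p (act (p⁻¹ : Port) s)) = false
      rw [act_inv, inv_apply, Bool.xor_self])

/-- The element `(u,v)τ` of `Aut(T) = (Aut(T) × Aut(T)) ⋊ S₂`: the automorphism acting
as `u` on the left subtree, as `v` on the right subtree, and by `τ` on the first level. -/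
def mk (u v : Port) (τ : Bool) : Port := fun s =>
  match s with
  | [] => τ
  | b :: t => if b then v t else u t

/-- `σ`, the automorphism swapping the two first-level subtrees. -/
def sigma : Port := mk 1 1 true

/-- Auxiliary structural recursion giving the portraits of the three generators. -/
def aT : List Bool → Bool × Bool × Bool
  | [] => (false, true, true)
  | b :: s => (if b then (aT s).2.2 else false,
               if b then (aT s).1 else false,
               if b then false else (aT s).2.1)

/-- The generator `a₁ = (id, a₃)`. -/
def a1 : Port := fun s => (aT s).1
/-- The generator `a₂ = (id, a₁)σ`. -/
def a2 : Port := fun s => (aT s).2.1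
/-- The generator `a₃ = (a₂, id)σ`. -/
def a3 : Port := fun s => (aT s).2.2

lemma a1_eq : a1 = mk 1 a3 false := by
  funext s
  cases s with
  | nil => rfl
  | cons b t => cases b <;> rfl

lemma a2_eq : a2 = mk 1 a1 true := by
  funext s
  cases s with
  | nil => rfl
  | cons b t => cases b <;> rfl

lemma a3_eq : a3 = mk a2 1 true := by
  funext s
  cases s with
  | nil => rfl
  | cons b t => cases b <;> rfl

lemma act_length : ∀ (l : List Bool) (p : Port), (act p l).length = l.length
  | [], _ => rfl
  | _ :: l, p => congrArg Nat.succ (act_length l _)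

lemma invAct_length : ∀ (l : List Bool) (p : Port), (invAct p l).length = l.length
  | [], _ => rfl
  | _ :: l, p => congrArg Nat.succ (invAct_length l _)

/-- The subgroup of `Aut(T)` of automorphisms acting trivially below level `n`;
it is (canonically isomorphic to) `W_n = Aut(T_n)`. -/
def W (n : ℕ) : Subgroup Port where
  carrier := {p | ∀ s : List Bool, n ≤ s.length → p s = false}
  one_mem' := fun _ _ => rfl
  mul_mem' := by
    intro p q hp hq s hs
    show xor (p s) (q (act p s)) = false
    rw [hp s hs, hq _ (by rw [act_length]; exact hs), Bool.xor_self]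
  inv_mem' := by
    intro p hp s hs
    show p (invAct p s) = false
    exact hp _ (by rw [invAct_length]; exact hs)

/-- Restriction ("truncation") of a tree automorphism to the first `n` levels. -/
def trunc (n : ℕ) (p : Port) : Port := fun s => if s.length < n then p s else false

lemma trunc_mem_W (n : ℕ) (p : Port) : trunc n p ∈ W n := by
  intro s hs
  simp only [trunc, if_neg (Nat.not_lt.mpr hs)]

instance : TopologicalSpace Port := inferInstanceAs (TopologicalSpace (List Bool → Bool))

section TopologyLemmas

variable {X : Type*} [TopologicalSpace X]

lemma continuous_bcond {f g h : X → Bool} (hf : Continuous f) (hg : Continuous g)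
    (hh : Continuous h) : Continuous fun x => cond (f x) (g x) (h x) := by
  have heq : (fun x => cond (f x) (g x) (h x)) = fun x => if f x = true then g x else h x := by
    funext x; cases hx : f x <;> simp
  rw [heq]
  refine Continuous.if ?_ hg hh
  have hclopen : IsClopen {x | f x = true} :=
    ⟨(isClosed_discrete {true}).preimage hf, (isOpen_discrete {true}).preimage hf⟩
  intro a ha
  rw [hclopen.frontier_eq] at ha
  exact absurd ha (Set.notMem_empty a)

lemma continuous_bnot {f : X → Bool} (hf : Continuous f) : Continuous fun x => !(f x) := by
  have heq : (fun x => !(f x)) = fun x => cond (f x) false true := by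
    funext x; cases f x <;> rfl
  rw [heq]
  exact continuous_bcond hf continuous_const continuous_const

lemma continuous_bxor {f g : X → Bool} (hf : Continuous f) (hg : Continuous g) :
    Continuous fun x => xor (f x) (g x) := by
  have heq : (fun x => xor (f x) (g x)) = fun x => cond (f x) (!(g x)) (g x) := by
    funext x; cases f x <;> cases g x <;> rfl
  rw [heq]
  exact continuous_bcond hf (continuous_bnot hg) hg

end TopologyLemmas

lemma continuous_sub_comp {X : Type*} [TopologicalSpace X] {f : X → Port} (b : Bool)
    (hf : Continuous f) : Continuous fun x => sub (f x) b := by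
  refine continuous_pi fun s => ?_
  exact (continuous_apply (b :: s)).comp hf

lemma continuous_eval_act :
    ∀ s : List Bool, Continuous fun pq : Port × Port => pq.2 (act pq.1 s) := by
  intro s
  induction s with
  | nil => exact (continuous_apply ([] : List Bool)).comp continuous_snd
  | cons b l ih =>
      have key : (fun pq : Port × Port => pq.2 (act pq.1 (b :: l)))
          = fun pq => cond (xor b (pq.1 []))
              ((fun pq' : Port × Port => pq'.2 (act pq'.1 l)) (sub pq.1 b, sub pq.2 true))
              ((fun pq' : Port × Port => pq'.2 (act pq'.1 l)) (sub pq.1 b, sub pq.2 false)) := by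
        funext pq
        rw [act_cons]
        cases hx : xor b (pq.1 []) <;> rfl
      rw [key]
      have hc : Continuous fun pq : Port × Port => xor b (pq.1 []) :=
        continuous_bxor continuous_const ((continuous_apply ([] : List Bool)).comp continuous_fst)
      refine continuous_bcond hc ?_ ?_ <;>
        exact ih.comp (((continuous_sub_comp b continuous_fst).prodMk
          (continuous_sub_comp _ continuous_snd)))

lemma continuous_eval_inv :
    ∀ s : List Bool, Continuous fun p : Port => p (invAct p s) := by
  intro s
  induction s with
  | nil => exact continuous_apply ([] : List Bool)
  | cons b l ih =>
      have key : (fun p : Port => p (invAct p (b :: l)))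
          = fun p => cond (xor b (p []))
              ((fun q : Port => q (invAct q l)) (sub p true))
              ((fun q : Port => q (invAct q l)) (sub p false)) := by
        funext p
        rw [invAct_cons]
        have : ∀ c : Bool, p (c :: invAct (sub p c) l) = (sub p c) (invAct (sub p c) l) :=
          fun c => rfl
        cases hx : xor b (p []) <;> simp only [hx] <;> exact this _
      rw [key]
      have hc : Continuous fun p : Port => xor b (p []) :=
        continuous_bxor continuous_const (continuous_apply ([] : List Bool))
      exact continuous_bcond hc (ih.comp (continuous_sub_comp true continuous_id))
        (ih.comp (continuous_sub_comp false continuous_id))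

instance : IsTopologicalGroup Port where
  continuous_mul := by
    refine continuous_pi fun s => ?_
    exact continuous_bxor ((continuous_apply s).comp continuous_fst) (continuous_eval_act s)
  continuous_inv := by
    refine continuous_pi fun s => ?_
    exact continuous_eval_inv s

/-! The diagonal map `x ↦ (x, x)` is a continuous endomorphism of `Aut(T)`. It sends the
generators into `⟨a₁, a₂, a₃⟩`: `(a₁, a₁) = a₂²`, `(a₂, a₂) = a₃²`, and `a₃ = a₂⁻¹a₁⁻¹` because the
cyclic products of the generators are trivial. So the preimage of the closed group `G` is a closed
subgroup containing the generators, hence contains `G`. -/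

lemma sub_mk (u v : Port) (τ b : Bool) : sub (mk u v τ) b = cond b v u := by
  cases b <;> rfl

lemma mk_mul (u v u' v' : Port) (τ τ' : Bool) :
    mk u v τ * mk u' v' τ' = mk (u * cond τ v' u') (v * cond τ u' v') (xor τ τ') := by
  funext s
  cases s with
  | nil => rfl
  | cons b t =>
      rw [mul_apply, act_cons, sub_mk]
      cases b <;> cases τ <;> rfl

lemma mk_one_one_false : mk 1 1 false = 1 := by
  funext s
  cases s with
  | nil => rfl
  | cons b t => cases b <;> rfl

lemma a2_mul_self : a2 * a2 = mk a1 a1 false := by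
  rw [a2_eq, mk_mul]; simp

lemma a3_mul_self : a3 * a3 = mk a2 a2 false := by
  rw [a3_eq, mk_mul]; simp

lemma a1_mul_a2_mul_a3_eq_mk : a1 * a2 * a3 = mk 1 (a3 * a1 * a2) false := by
  rw [a1_eq, a2_eq, a3_eq, mk_mul, mk_mul]
  simp [← a1_eq, ← a2_eq, ← a3_eq, mul_assoc]

lemma a3_mul_a1_mul_a2_eq_mk : a3 * a1 * a2 = mk (a2 * a3 * a1) 1 false := by
  rw [a1_eq, a2_eq, a3_eq, mk_mul, mk_mul]
  simp [← a1_eq, ← a2_eq, ← a3_eq, mul_assoc]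

lemma a2_mul_a3_mul_a1_eq_mk : a2 * a3 * a1 = mk 1 (a1 * a2 * a3) false := by
  rw [a1_eq, a2_eq, a3_eq, mk_mul, mk_mul]
  simp [← a1_eq, ← a2_eq, ← a3_eq, mul_assoc]

/-- The three cyclic products are sections of one another, so each is trivial at every depth. -/
lemma a1_mul_a2_mul_a3_eq_one : a1 * a2 * a3 = 1 := by
  have key : ∀ s : List Bool,
      (a1 * a2 * a3) s = false ∧ (a3 * a1 * a2) s = false ∧ (a2 * a3 * a1) s = false := by
    intro s
    induction s with
    | nil =>
        exact ⟨congrFun a1_mul_a2_mul_a3_eq_mk [], congrFun a3_mul_a1_mul_a2_eq_mk [],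
          congrFun a2_mul_a3_mul_a1_eq_mk []⟩
    | cons b t ih =>
        obtain ⟨hP, hQ, hR⟩ := ih
        have eP := congrFun a1_mul_a2_mul_a3_eq_mk (b :: t)
        have eQ := congrFun a3_mul_a1_mul_a2_eq_mk (b :: t)
        have eR := congrFun a2_mul_a3_mul_a1_eq_mk (b :: t)
        cases b
        · exact ⟨eP.trans (one_apply t), eQ.trans hR, eR.trans (one_apply t)⟩
        · exact ⟨eP.trans hQ, eQ.trans (one_apply t), eR.trans hP⟩
  funext s
  exact (key s).1

lemma a3_eq_inv_mul_inv : a3 = a2⁻¹ * a1⁻¹ := by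
  rw [← mul_inv_rev]
  exact eq_inv_of_mul_eq_one_right a1_mul_a2_mul_a3_eq_one

def diag : Port →* Port where
  toFun x := mk x x false
  map_one' := mk_one_one_false
  map_mul' x y := by rw [mk_mul]; simp

lemma continuous_diag : Continuous diag := by
  refine continuous_pi fun s => ?_
  cases s with
  | nil => exact continuous_const
  | cons b t => cases b <;> exact continuous_apply t

lemma topologicalClosure_closure_le_comap {G H : Type*} [Group G] [TopologicalSpace G]
    [IsTopologicalGroup G] [Group H] [TopologicalSpace H] {f : G →* H} (hf : Continuous f)
    {s : Set G} {K : Subgroup H} (hK : IsClosed (K : Set H)) (hs : ∀ x ∈ s, f x ∈ K) :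
    (Subgroup.closure s).topologicalClosure ≤ K.comap f :=
  Subgroup.topologicalClosure_minimal _ ((Subgroup.closure_le _).mpr hs) (hK.preimage hf)

/-- Let `G` be the closed subgroup of `Aut(T)` generated by
`a₁, a₂, a₃`. For any `x ∈ G`, the element `(x,x)` is in `G`. -/
theorem diagonal_mem_closure (x : Port)
    (hx : x ∈ (Subgroup.closure {a1, a2, a3} : Subgroup Port).topologicalClosure) :
    mk x x false ∈ (Subgroup.closure {a1, a2, a3} : Subgroup Port).topologicalClosure := by
  set Γ := (Subgroup.closure {a1, a2, a3} : Subgroup Port)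
  have ha2 : a2 ∈ Γ := Subgroup.subset_closure (by simp)
  have ha3 : a3 ∈ Γ := Subgroup.subset_closure (by simp)
  have hd1 : diag a1 ∈ Γ := by
    rw [show diag a1 = a2 * a2 from a2_mul_self.symm]; exact mul_mem ha2 ha2
  have hd2 : diag a2 ∈ Γ := by
    rw [show diag a2 = a3 * a3 from a3_mul_self.symm]; exact mul_mem ha3 ha3
  have hd3 : diag a3 ∈ Γ := by
    rw [a3_eq_inv_mul_inv, map_mul, map_inv, map_inv]
    exact mul_mem (inv_mem hd2) (inv_mem hd1)
  have hgen : ∀ y ∈ ({a1, a2, a3} : Set Port), diag y ∈ Γ.topologicalClosure := by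
    rintro y (rfl | rfl | rfl)
    exacts [Γ.le_topologicalClosure hd1, Γ.le_topologicalClosure hd2,
      Γ.le_topologicalClosure hd3]
  exact topologicalClosure_closure_le_comap continuous_diag
    (Subgroup.isClosed_topologicalClosure Γ) hgen hx

end TreeAut
end
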